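/- arXiv:0809.0660 — 3 statements merged into one kernel-verified Lean document; each statement's English description precedes it below -/
import Mathlib

section
/- Let A ∈ ℝ^{m×n}, y ∈ ℝ^m with Ax = y solvable. The minimum of ‖x‖₀ over {x : Ax = y} equals n minus the maximum of ∑ᵢ zᵢ over pairs (z, x) with z ∈ {0,1}ⁿ, Ax = y, and ‖D(z)x‖₁ = 0, where D(z) is the diagonal matrix with diagonal z. -/
/-- ℓ⁰ "norm": number of nonzero coordinates. -/
noncomputable def l0norm {n : ℕ} (x : Fin n → ℝ) : ℕ :=
  (Finset.univ.filter fun i => x i ≠ 0).card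

lemma card_zero_eq {n : ℕ} (x : Fin n → ℝ) :
    ((Finset.univ.filter fun i => x i = 0).card : ℝ) = n - l0norm x := by
  have h := Finset.card_filter_add_card_filter_not (s := (Finset.univ : Finset (Fin n)))
    (p := fun i => x i = 0)
  have hcard : (Finset.univ : Finset (Fin n)).card = n := Finset.card_univ.trans (Fintype.card_fin n)
  have : (Finset.univ.filter fun i => x i = 0).card + l0norm x = n := by
    simpa [l0norm, hcard] using h
  have := congrArg (fun k : ℕ => (k : ℝ)) this
  push_cast at this
  linarith

theorem stmt_10 (m n : ℕ) (A : Matrix (Fin m) (Fin n) ℝ) (y : Fin m → ℝ)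
    (hy : ∃ x : Fin n → ℝ, A.mulVec x = y) :
    ((sInf {c : ℕ | ∃ x : Fin n → ℝ, A.mulVec x = y ∧ l0norm x = c} : ℕ) : ℝ) =
      (n : ℝ) - sSup {s : ℝ | ∃ z x : Fin n → ℝ, (∀ i, z i = 0 ∨ z i = 1) ∧
        A.mulVec x = y ∧ (∑ i, z i * |x i|) = 0 ∧ s = ∑ i, z i} := by
  set T : Set ℕ := {c : ℕ | ∃ x : Fin n → ℝ, A.mulVec x = y ∧ l0norm x = c} with hT
  set S : Set ℝ := {s : ℝ | ∃ z x : Fin n → ℝ, (∀ i, z i = 0 ∨ z i = 1) ∧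
        A.mulVec x = y ∧ (∑ i, z i * |x i|) = 0 ∧ s = ∑ i, z i} with hS
  have hTne : T.Nonempty := by
    obtain ⟨x, hx⟩ := hy
    exact ⟨l0norm x, x, hx, rfl⟩
  obtain ⟨x₀, hx₀, hc₀⟩ := Nat.sInf_mem hTne
  set c₀ := sInf T with hc₀def
  -- candidate z₀
  set z₀ : Fin n → ℝ := fun i => if x₀ i = 0 then 1 else 0 with hz₀
  have hz₀sum : (∑ i, z₀ i) = (n : ℝ) - c₀ := by
    have : (∑ i, z₀ i) = ((Finset.univ.filter fun i => x₀ i = 0).card : ℝ) := by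
      simp [z₀, Finset.sum_ite, Finset.sum_const]
    rw [this, card_zero_eq, hc₀]
  have hmem : ((n : ℝ) - c₀) ∈ S := by
    refine ⟨z₀, x₀, ?_, hx₀, ?_, hz₀sum.symm⟩
    · intro i; by_cases h : x₀ i = 0 <;> simp [z₀, h]
    · apply Finset.sum_eq_zero
      intro i _
      by_cases h : x₀ i = 0 <;> simp [z₀, h]
  -- upper bound for S
  have hub : ∀ s ∈ S, s ≤ (n : ℝ) - c₀ := by
    rintro s ⟨z, x, hz01, hx, hzero, rfl⟩
    have hterm : ∀ i, z i * |x i| = 0 := by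
      intro i
      have hnn : ∀ j ∈ Finset.univ, 0 ≤ z j * |x j| := by
        intro j _
        rcases hz01 j with h | h <;> simp [h, abs_nonneg, mul_nonneg, abs_nonneg (x j)]
      exact (Finset.sum_eq_zero_iff_of_nonneg hnn).mp hzero i (Finset.mem_univ i)
    have hle : ∀ i, z i ≤ if x i = 0 then 1 else 0 := by
      intro i
      by_cases h : x i = 0
      · rcases hz01 i with h1 | h1 <;> simp [h, h1]
      · have : z i = 0 := by
          have := hterm i
          have habs : |x i| ≠ 0 := fun hc => h (abs_eq_zero.mp hc)
          rcases mul_eq_zero.mp this with h2 | h2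
          · exact h2
          · exact absurd h2 habs
        simp [h, this]
    have h1 : (∑ i, z i) ≤ ∑ i, (if x i = 0 then (1:ℝ) else 0) :=
      Finset.sum_le_sum fun i _ => hle i
    have h2 : (∑ i, (if x i = 0 then (1:ℝ) else 0)) = (n : ℝ) - l0norm x := by
      have : (∑ i, (if x i = 0 then (1:ℝ) else 0))
          = ((Finset.univ.filter fun i => x i = 0).card : ℝ) := by
        simp [Finset.sum_ite, Finset.sum_const]
      rw [this, card_zero_eq]
    have h3 : (c₀ : ℝ) ≤ l0norm x := by
      exact_mod_cast Nat.sInf_le (show l0norm x ∈ T from ⟨x, hx, rfl⟩)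
    linarith
  have hSne : S.Nonempty := ⟨_, hmem⟩
  have hSbdd : BddAbove S := ⟨(n : ℝ) - c₀, fun s hs => hub s hs⟩
  have : sSup S = (n : ℝ) - c₀ :=
    le_antisymm (csSup_le hSne hub) (le_csSup hSbdd hmem)
  rw [this]; ring
end

section
/- Let X be a positive semidefinite (2n+1)×(2n+1) matrix feasible for the bidual SDP (i.e., trace(A_j X) = y_j for j=1,…,m, trace(E₀X) = 1, trace(E_i X) = 0 and trace(C_i X) = 0 for i=1,…,n, with the structured matrices Q, A_j, E_i, C_i defined in the paper), and let w ∈ W₀ (first n+1 coordinates zero, last n coordinates in ker A). Then X + wwᵀ is also positive semidefinite, feasible for the same constraints, and trace(Q(X + wwᵀ)) = trace(QX). -/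
/-- Index type for ℝ^{2n+1}, split into blocks (z₀, z, x). -/
abbrev Idx (n : ℕ) := Fin 1 ⊕ (Fin n ⊕ Fin n)

/-- The objective matrix Q: (z₀,z)-block ½eᵀ, symmetric, zeros elsewhere. -/
noncomputable def Qmat (n : ℕ) : Matrix (Idx n) (Idx n) ℝ := fun p q =>
  match p, q with
  | Sum.inl _, Sum.inr (Sum.inl _) => 1 / 2
  | Sum.inr (Sum.inl _), Sum.inl _ => 1 / 2
  | _, _ => 0

/-- The constraint matrix A_j: (z₀,x)-block ½a_jᵀ, symmetric. -/
noncomputable def Amat {m n : ℕ} (A : Matrix (Fin m) (Fin n) ℝ) (j : Fin m) :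
    Matrix (Idx n) (Idx n) ℝ := fun p q =>
  match p, q with
  | Sum.inl _, Sum.inr (Sum.inr i) => A j i / 2
  | Sum.inr (Sum.inr i), Sum.inl _ => A j i / 2
  | _, _ => 0

/-- E₀ = diag(1,0,…,0). -/
noncomputable def E0mat (n : ℕ) : Matrix (Idx n) (Idx n) ℝ := fun p q =>
  match p, q with
  | Sum.inl _, Sum.inl _ => 1
  | _, _ => 0

/-- E_i: (z₀,z)-entries −e_i (symmetric) and z-block 2·diag(e_i). -/
noncomputable def Emat (n : ℕ) (i : Fin n) : Matrix (Idx n) (Idx n) ℝ := fun p q =>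
  match p, q with
  | Sum.inl _, Sum.inr (Sum.inl j) => if j = i then -1 else 0
  | Sum.inr (Sum.inl j), Sum.inl _ => if j = i then -1 else 0
  | Sum.inr (Sum.inl j), Sum.inr (Sum.inl j') => if j = i ∧ j' = i then 2 else 0
  | _, _ => 0

/-- C_i: (z,x)-block diag(e_i), symmetric. -/
noncomputable def Cmat (n : ℕ) (i : Fin n) : Matrix (Idx n) (Idx n) ℝ := fun p q =>
  match p, q with
  | Sum.inr (Sum.inl j), Sum.inr (Sum.inr j') => if j = i ∧ j' = i then 1 else 0
  | Sum.inr (Sum.inr j), Sum.inr (Sum.inl j') => if j = i ∧ j' = i then 1 else 0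
  | _, _ => 0

/-- Feasibility for the bidual SDP (8). -/
def BidualFeasible {m n : ℕ} (A : Matrix (Fin m) (Fin n) ℝ) (y : Fin m → ℝ)
    (X : Matrix (Idx n) (Idx n) ℝ) : Prop :=
  X.PosSemidef ∧ (∀ j, (Amat A j * X).trace = y j) ∧ (E0mat n * X).trace = 1 ∧
    ∀ i, (Emat n i * X).trace = 0 ∧ (Cmat n i * X).trace = 0

/-- Optimality for the bidual SDP (8). -/
def BidualOptimal {m n : ℕ} (A : Matrix (Fin m) (Fin n) ℝ) (y : Fin m → ℝ)
    (X : Matrix (Idx n) (Idx n) ℝ) : Prop :=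
  BidualFeasible A y X ∧
    ∀ Y, BidualFeasible A y Y → (Qmat n * Y).trace ≤ (Qmat n * X).trace

/-- Membership in W₀: the z₀ and z coordinates vanish and the x coordinates
lie in ker A. -/
def memW0 {m n : ℕ} (A : Matrix (Fin m) (Fin n) ℝ) (w : Idx n → ℝ) : Prop :=
  w (Sum.inl 0) = 0 ∧ (∀ i : Fin n, w (Sum.inr (Sum.inl i)) = 0) ∧
    A.mulVec (fun j => w (Sum.inr (Sum.inr j))) = 0

/-!
Every one of the constraint and objective matrices `Q`, `A_j`, `E₀`, `E_i`, `C_i` vanishes on the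
`(x, x)`-block, while `w ∈ W₀` is supported on the `x`-coordinates. Hence `trace (M wwᵀ) = wᵀ M w = 0`
for each of them, so adding `wwᵀ` changes none of the traces; and `wwᵀ` is positive semidefinite.
-/

open Matrix

theorem Matrix.trace_mul_vecMulVec_self {ι R : Type*} [Fintype ι] [CommSemiring R]
    (M : Matrix ι ι R) (w : ι → R) : (M * vecMulVec w w).trace = w ⬝ᵥ M *ᵥ w := by
  rw [mul_vecMulVec, trace_vecMulVec, dotProduct_comm]

theorem Matrix.dotProduct_mulVec_self_eq_zero {ι R : Type*} [Fintype ι] [CommSemiring R]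
    [NoZeroDivisors R] {M : Matrix ι ι R} {w : ι → R}
    (h : ∀ p q, w p ≠ 0 → w q ≠ 0 → M p q = 0) : w ⬝ᵥ M *ᵥ w = 0 := by
  simp only [dotProduct, mulVec, Finset.mul_sum]
  refine Finset.sum_eq_zero fun p _ => Finset.sum_eq_zero fun q _ => ?_
  by_cases hp : w p = 0
  · simp [hp]
  by_cases hq : w q = 0
  · simp [hq]
  simp [h p q hp hq]

theorem trace_mul_add_vecMulVec_of_memW0 {m n : ℕ} {A : Matrix (Fin m) (Fin n) ℝ}
    {w : Idx n → ℝ} (hw : memW0 A w) {M : Matrix (Idx n) (Idx n) ℝ}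
    (hM : ∀ i j, M (Sum.inr (Sum.inr i)) (Sum.inr (Sum.inr j)) = 0)
    (X : Matrix (Idx n) (Idx n) ℝ) : (M * (X + vecMulVec w w)).trace = (M * X).trace := by
  obtain ⟨hw₀, hwz, -⟩ := hw
  rw [mul_add, trace_add, trace_mul_vecMulVec_self, add_eq_left]
  have hsupp : ∀ p, w p ≠ 0 → ∃ i, p = Sum.inr (Sum.inr i) := by
    rintro (p | p | i) hp
    · exact absurd (Fin.fin_one_eq_zero p ▸ hw₀) hp
    · exact absurd (hwz p) hp
    · exact ⟨i, rfl⟩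
  refine dotProduct_mulVec_self_eq_zero fun p q hp hq => ?_
  obtain ⟨i, rfl⟩ := hsupp p hp
  obtain ⟨j, rfl⟩ := hsupp q hq
  exact hM i j

theorem BidualFeasible.add_vecMulVec {m n : ℕ} {A : Matrix (Fin m) (Fin n) ℝ}
    {y : Fin m → ℝ} {X : Matrix (Idx n) (Idx n) ℝ} (hX : BidualFeasible A y X)
    {w : Idx n → ℝ} (hw : memW0 A w) : BidualFeasible A y (X + vecMulVec w w) := by
  obtain ⟨hpsd, hA, hE₀, hEC⟩ := hX
  have hww : (vecMulVec w w).PosSemidef := by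
    simpa using posSemidef_vecMulVec_self_star w
  refine ⟨hpsd.add hww, fun j => ?_, ?_, fun i => ⟨?_, ?_⟩⟩
  · rw [trace_mul_add_vecMulVec_of_memW0 hw (fun _ _ => rfl), hA]
  · rw [trace_mul_add_vecMulVec_of_memW0 hw (fun _ _ => rfl), hE₀]
  · rw [trace_mul_add_vecMulVec_of_memW0 hw (fun _ _ => rfl), (hEC i).1]
  · rw [trace_mul_add_vecMulVec_of_memW0 hw (fun _ _ => rfl), (hEC i).2]

theorem stmt_16 (m n : ℕ) (A : Matrix (Fin m) (Fin n) ℝ) (y : Fin m → ℝ)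
    (X : Matrix (Idx n) (Idx n) ℝ) (hX : BidualFeasible A y X)
    (w : Idx n → ℝ) (hw : memW0 A w) :
    BidualFeasible A y (X + Matrix.vecMulVec w w) ∧
      (Qmat n * (X + Matrix.vecMulVec w w)).trace = (Qmat n * X).trace :=
  ⟨hX.add_vecMulVec hw, trace_mul_add_vecMulVec_of_memW0 hw (fun _ _ => rfl) X⟩
end

section
/- If the solution set of the bidual SDP (8) is nonempty and rank(A) = m < n, then it is not a singleton: for any optimal X* and any nonzero w ∈ W₀, the matrix X* + wwᵀ is a distinct optimal solution. -/
/-!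
Since `trace (M * w wᵀ) = wᵀ M w`, adding `w wᵀ` to `X` leaves `trace (M * X)` unchanged whenever
`w` is isotropic for `M`. A vector of `W₀` is supported on the `x`-coordinates, and every data
matrix `Q, A_j, E₀, E_i, C_i` of the SDP has vanishing `(x, x)`-block, so `w` is isotropic for all
of them: `X + w wᵀ` is again feasible (it stays positive semidefinite) with the same objective
value, and it differs from `X` because `w wᵀ ≠ 0` for `w ≠ 0`.
-/

open Matrix

theorem Matrix.mulVec_dotProduct_self_eq_zero {ι R : Type*} [Fintype ι]
    [NonUnitalNonAssocSemiring R] {M : Matrix ι ι R} {w : ι → R}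
    (h : ∀ p q, w p ≠ 0 → w q ≠ 0 → M p q = 0) : M *ᵥ w ⬝ᵥ w = 0 := by
  refine Finset.sum_eq_zero fun p _ => ?_
  by_cases hp : w p = 0
  · rw [hp, mul_zero]
  refine mul_eq_zero_of_left (Finset.sum_eq_zero fun q _ => ?_) _
  by_cases hq : w q = 0
  · rw [hq, mul_zero]
  · exact mul_eq_zero_of_left (h p q hp hq) _

theorem Matrix.trace_mul_add_vecMulVec_self {ι R : Type*} [Fintype ι] [Semiring R]
    {M : Matrix ι ι R} {w : ι → R}
    (h : ∀ p q, w p ≠ 0 → w q ≠ 0 → M p q = 0) (X : Matrix ι ι R) :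
    (M * (X + vecMulVec w w)).trace = (M * X).trace := by
  rw [mul_add, trace_add, mul_vecMulVec, trace_vecMulVec, mulVec_dotProduct_self_eq_zero h,
    add_zero]

section W0

variable {m n : ℕ} {A : Matrix (Fin m) (Fin n) ℝ} {y : Fin m → ℝ} {w : Idx n → ℝ}

theorem memW0.exists_eq_inr_inr (hw : memW0 A w) {p : Idx n} (hp : w p ≠ 0) :
    ∃ i, p = Sum.inr (Sum.inr i) := by
  obtain ⟨hz₀, hz, -⟩ := hw
  rcases p with k | i | i
  · exact absurd (Subsingleton.elim k 0 ▸ hz₀) hp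
  · exact absurd (hz i) hp
  · exact ⟨i, rfl⟩

theorem memW0.trace_mul_add_vecMulVec_self (hw : memW0 A w) {M : Matrix (Idx n) (Idx n) ℝ}
    (hM : ∀ i j, M (Sum.inr (Sum.inr i)) (Sum.inr (Sum.inr j)) = 0)
    (X : Matrix (Idx n) (Idx n) ℝ) :
    (M * (X + vecMulVec w w)).trace = (M * X).trace := by
  refine Matrix.trace_mul_add_vecMulVec_self (fun p q hp hq => ?_) X
  obtain ⟨i, rfl⟩ := hw.exists_eq_inr_inr hp
  obtain ⟨j, rfl⟩ := hw.exists_eq_inr_inr hq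
  exact hM i j

theorem BidualFeasible.add_vecMulVec_self {X : Matrix (Idx n) (Idx n) ℝ}
    (hX : BidualFeasible A y X) (hw : memW0 A w) : BidualFeasible A y (X + vecMulVec w w) := by
  obtain ⟨hpsd, hA, hE₀, hEC⟩ := hX
  refine ⟨hpsd.add (posSemidef_vecMulVec_self_star w), fun j => ?_, ?_, fun i => ⟨?_, ?_⟩⟩
  · rw [hw.trace_mul_add_vecMulVec_self (fun _ _ => rfl)]; exact hA j
  · rw [hw.trace_mul_add_vecMulVec_self (fun _ _ => rfl)]; exact hE₀
  · rw [hw.trace_mul_add_vecMulVec_self (fun _ _ => rfl)]; exact (hEC i).1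
  · rw [hw.trace_mul_add_vecMulVec_self (fun _ _ => rfl)]; exact (hEC i).2

theorem BidualOptimal.add_vecMulVec_self {X : Matrix (Idx n) (Idx n) ℝ}
    (hX : BidualOptimal A y X) (hw : memW0 A w) : BidualOptimal A y (X + vecMulVec w w) := by
  refine ⟨hX.1.add_vecMulVec_self hw, fun Y hY => ?_⟩
  rw [hw.trace_mul_add_vecMulVec_self (fun _ _ => rfl)]
  exact hX.2 Y hY

end W0

theorem stmt_17_general (m n : ℕ) (A : Matrix (Fin m) (Fin n) ℝ) (y : Fin m → ℝ)
    (X : Matrix (Idx n) (Idx n) ℝ) (hX : BidualOptimal A y X)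
    (w : Idx n → ℝ) (hw : memW0 A w) (hw0 : w ≠ 0) :
    BidualOptimal A y (X + Matrix.vecMulVec w w) ∧
      X + Matrix.vecMulVec w w ≠ X :=
  ⟨hX.add_vecMulVec_self hw, by simpa using hw0⟩

theorem stmt_17 (m n : ℕ) (A : Matrix (Fin m) (Fin n) ℝ) (y : Fin m → ℝ)
    (hrank : A.rank = m) (hmn : m < n)
    (X : Matrix (Idx n) (Idx n) ℝ) (hX : BidualOptimal A y X)
    (w : Idx n → ℝ) (hw : memW0 A w) (hw0 : w ≠ 0) :
    BidualOptimal A y (X + Matrix.vecMulVec w w) ∧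
      X + Matrix.vecMulVec w w ≠ X :=
  stmt_17_general m n A y X hX w hw hw0
end
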